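/- For any unitary matrix U on ℂ^d, the discrete Wigner propagator admits the operational form G_W((m',n'),(m,n)) = (1/d) · Tr( A(m',n') · U · A(m,n) · U† ), where A(m,n) = (1/d) Σ_{k,j ∈ ZMod d} ω^{km−jn} D(k,j)† are the phase-point operators. -/

import Mathlib

open Matrix Complex

noncomputable section

/-- `ω = exp(2πi/d)`, a primitive `d`-th root of unity. -/
def omega (d : ℕ) : ℂ := Complex.exp (2 * Real.pi * Complex.I / d)

/-- Powers of `ω` with exponent valued in `ZMod d`, evaluated via the canonical
integer representative (well-defined since `ω ^ d = 1`). -/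
def wpow (d : ℕ) (x : ZMod d) : ℂ := omega d ^ x.val

/-- The clock matrix `Z`, acting as `Z e_n = ω^n e_n`. -/
def clockZ (d : ℕ) : Matrix (ZMod d) (ZMod d) ℂ :=
  Matrix.diagonal (fun n => wpow d n)

/-- The shift matrix `X`, acting as `X e_n = e_{n+1}`. -/
def shiftX (d : ℕ) : Matrix (ZMod d) (ZMod d) ℂ :=
  Matrix.of (fun i j => if i = j + 1 then 1 else 0)

/-- The displacement operator `D(k,j) = ω^{-2⁻¹ k j} Z^k X^j`. -/
def Dop (d : ℕ) [NeZero d] (k j : ZMod d) : Matrix (ZMod d) (ZMod d) ℂ :=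
  wpow d (-(2⁻¹ * k * j)) • (clockZ d ^ k.val * shiftX d ^ j.val)

/-- The Weyl symbol of a matrix `A`: `Ã(k,j) = Tr(A · D(k,j))`. -/
def weylSymbol (d : ℕ) [NeZero d] (A : Matrix (ZMod d) (ZMod d) ℂ) (k j : ZMod d) : ℂ :=
  Matrix.trace (A * Dop d k j)

/-- The phase-space symbol of `B`:
`B_W(m,n) = (1/d) Σ_{k,j} Tr(B·D(k,j)) ω^{jn−km}`. -/
def psSymbol (d : ℕ) [NeZero d] (B : Matrix (ZMod d) (ZMod d) ℂ) (m n : ZMod d) : ℂ :=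
  (1 / (d : ℂ)) * ∑ k : ZMod d, ∑ j : ZMod d,
    weylSymbol d B k j * wpow d (j * n - k * m)

/-- The discrete Wigner propagator of a unitary `U`:
`G_W((m',n'),(m,n)) = (1/d²) Σ_{m̃,ñ} ω^{−2[m̃(n'−n) − ñ(m'−m)]}
  U_W(m+m̃, n+ñ) · conj(U_W(m'−m̃, n'−ñ))`. -/
def propG (d : ℕ) [NeZero d] (U : Matrix (ZMod d) (ZMod d) ℂ)
    (μ' μ : ZMod d × ZMod d) : ℂ :=
  (1 / (d : ℂ) ^ 2) * ∑ mt : ZMod d, ∑ nt : ZMod d,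
    wpow d (-(2 * (mt * (μ'.2 - μ.2) - nt * (μ'.1 - μ.1)))) *
      psSymbol d U (μ.1 + mt) (μ.2 + nt) *
      (starRingEnd ℂ) (psSymbol d U (μ'.1 - mt) (μ'.2 - nt))

/-- The phase-point operators `A(m,n) = (1/d) Σ_{k,j} ω^{km−jn} D(k,j)†`. -/
def phasePoint (d : ℕ) [NeZero d] (m n : ZMod d) : Matrix (ZMod d) (ZMod d) ℂ :=
  (1 / (d : ℂ)) • ∑ k : ZMod d, ∑ j : ZMod d, wpow d (k * m - j * n) • (Dop d k j)ᴴ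

/-!
Entrywise, the phase-point operator is `A(m,n)_{ab} = [a + b = 2m] ω^{(a-b)n}`, and the
phase-space symbol is `U_W(m,n) = Tr(U A(m,n))`.
Expanding the two traces, the propagator becomes a sum over four matrix indices of
`U_{jk} conj(U_{il})` times the twisted sum over `(m̃,ñ)` of
`A(m+m̃,n+ñ)_{kj} conj(A(m'-m̃,n'-ñ)_{li})`. Orthogonality of characters in `ñ` and the support
condition in `m̃` collapse that sum to `d · A(m',n')_{ij} A(m,n)_{kl}`, which is the summand of
`Tr(A(m',n') U A(m,n) U†)`.
-/

section TraceExpansion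

variable {ι κ : Type*} [Fintype ι] [Fintype κ]

lemma sum_mul_trace_mul_mul_conj_trace_mul (U : Matrix ι ι ℂ) (w : κ → κ → ℂ)
    (A A' : κ → κ → Matrix ι ι ℂ) :
    ∑ x, ∑ y, w x y * (trace (U * A x y) * starRingEnd ℂ (trace (U * A' x y)))
      = ∑ i, ∑ l, ∑ j, ∑ k, U j k * starRingEnd ℂ (U i l) *
          ∑ x, ∑ y, w x y * (A x y k j * starRingEnd ℂ (A' x y l i)) := by
  simp only [trace, diag, mul_apply, map_sum, map_mul, Finset.sum_mul, Finset.mul_sum,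
    ← Fintype.sum_prod_type' (α₁ := κ) (α₂ := κ), Finset.sum_comm (γ := κ × κ)]
  congr! 5
  ring

lemma trace_mul_mul_mul_conjTranspose (P Q U : Matrix ι ι ℂ) :
    trace (P * U * Q * Uᴴ)
      = ∑ i, ∑ l, ∑ j, ∑ k, U j k * starRingEnd ℂ (U i l) * (P i j * Q k l) := by
  simp only [trace, diag, mul_apply, conjTranspose_apply, Finset.sum_mul, RCLike.star_def]
  refine Finset.sum_congr rfl fun i _ => Finset.sum_congr rfl fun l _ => ?_
  rw [Finset.sum_comm]
  exact Finset.sum_congr rfl fun j _ => Finset.sum_congr rfl fun k _ => by ring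

end TraceExpansion

section Characters

variable {d : ℕ} [NeZero d]

lemma wpow_eq_stdAddChar (x : ZMod d) : wpow d x = ZMod.stdAddChar x := by
  rw [wpow, omega, ZMod.stdAddChar_apply, ZMod.toCircle_apply, ← Complex.exp_nat_mul]
  ring_nf

lemma wpow_add (x y : ZMod d) : wpow d (x + y) = wpow d x * wpow d y := by
  simp only [wpow_eq_stdAddChar, AddChar.map_add_eq_mul]

lemma conj_wpow (x : ZMod d) : starRingEnd ℂ (wpow d x) = wpow d (-x) := by
  simp only [wpow_eq_stdAddChar, AddChar.map_neg_eq_conj]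

lemma wpow_pow (x : ZMod d) (t : ℕ) : wpow d x ^ t = wpow d (t * x) := by
  simp only [wpow_eq_stdAddChar, ← AddChar.map_nsmul_eq_pow, nsmul_eq_mul]

lemma sum_wpow_mul (c : ZMod d) :
    ∑ k : ZMod d, wpow d (k * c) = if c = 0 then (d : ℂ) else 0 := by
  simp only [wpow_eq_stdAddChar, AddChar.sum_mulShift c (ZMod.isPrimitive_stdAddChar d),
    ZMod.card, Nat.cast_ite, Nat.cast_zero]

end Characters

section Operators

variable {d : ℕ} [NeZero d]

lemma clockZ_pow (t : ℕ) : clockZ d ^ t = Matrix.diagonal fun a => wpow d (t * a) := by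
  simp only [clockZ, Matrix.diagonal_pow, Pi.pow_def, wpow_pow]

lemma shiftX_pow_apply (t : ℕ) (a b : ZMod d) :
    (shiftX d ^ t) a b = if a = b + t then 1 else 0 := by
  induction t generalizing a b with
  | zero => simp [Matrix.one_apply]
  | succ t ih =>
    have hshift : ∀ c, shiftX d c b = if c = b + 1 then 1 else 0 := fun _ => rfl
    simp only [pow_succ, Matrix.mul_apply, hshift, mul_ite, mul_one, mul_zero, Finset.sum_ite_eq',
      Finset.mem_univ, if_true, ih, Nat.cast_succ, add_assoc, add_comm (1 : ZMod d)]

lemma Dop_apply (k j a b : ZMod d) :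
    Dop d k j a b = if a = b + j then wpow d (k * a - 2⁻¹ * k * j) else 0 := by
  simp only [Dop, Matrix.smul_apply, clockZ_pow, Matrix.diagonal_mul, shiftX_pow_apply,
    ZMod.natCast_zmod_val, smul_eq_mul, mul_ite, mul_one, mul_zero]
  split_ifs
  · rw [← wpow_add]; ring_nf
  · rfl

end Operators

lemma midpoint_conditions_iff {R : Type*} [CommRing R] {half : R} (h2 : 2 * half = 1)
    (m' m mt i j k l : R) :
    (k + j = 2 * (m + mt) ∧ l + i = 2 * (m' - mt)) ∧ 2 * (m' - m) + (k - j) + (l - i) = 0 ↔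
      (i + j = 2 * m' ∧ k + l = 2 * m) ∧ mt = half * (j + k) - m := by
  constructor
  · rintro ⟨⟨hP, hQ⟩, hK⟩
    have hkl : k + l = 2 * m := by
      linear_combination half * (hP + hQ + hK) - (k + l - 2 * m) * h2
    exact ⟨⟨by linear_combination hP + hQ - hkl, hkl⟩,
      by linear_combination -half * hP - (m + mt) * h2⟩
  · rintro ⟨⟨hij, hkl⟩, rfl⟩
    refine ⟨⟨?_, ?_⟩, ?_⟩
    · linear_combination -(j + k) * h2
    · linear_combination hij + hkl + (j + k) * h2
    · linear_combination hkl - hij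

lemma two_mul_inv_two {d : ℕ} (hd : Odd d) : (2 : ZMod d) * 2⁻¹ = 1 := by
  exact_mod_cast ZMod.coe_mul_inv_eq_one 2 (Nat.coprime_two_left.mpr hd)

section OddModulus

variable {d : ℕ} [NeZero d]

lemma Dop_conjTranspose (hd : Odd d) (k j : ZMod d) : (Dop d k j)ᴴ = Dop d (-k) (-j) := by
  ext a b
  rw [Matrix.conjTranspose_apply, Dop_apply, Dop_apply]
  by_cases hab : b = a + j
  · rw [if_pos hab, if_pos (by rw [hab]; ring), Complex.star_def, conj_wpow, hab]
    congr 1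
    linear_combination k * j * two_mul_inv_two hd
  · rw [if_neg hab, if_neg fun h => hab (by rw [h]; ring), star_zero]

lemma phasePoint_eq_sum_Dop (hd : Odd d) (m n : ZMod d) :
    phasePoint d m n =
      (1 / (d : ℂ)) • ∑ k : ZMod d, ∑ j : ZMod d, wpow d (j * n - k * m) • Dop d k j := by
  rw [phasePoint]
  congr 1
  refine Fintype.sum_equiv (Equiv.neg _) _ _ fun k =>
    Fintype.sum_equiv (Equiv.neg _) _ _ fun j => ?_
  simp only [Dop_conjTranspose hd, Equiv.neg_apply]
  congr 2
  ring

lemma psSymbol_eq_trace_mul_phasePoint (hd : Odd d) (B : Matrix (ZMod d) (ZMod d) ℂ)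
    (m n : ZMod d) :
    psSymbol d B m n = trace (B * phasePoint d m n) := by
  simp only [phasePoint_eq_sum_Dop hd, Matrix.mul_smul, Matrix.mul_sum, trace_smul, trace_sum,
    psSymbol, weylSymbol, smul_eq_mul, mul_comm (wpow d _)]

lemma phasePoint_apply (hd : Odd d) (m n a b : ZMod d) :
    phasePoint d m n a b = if a + b = 2 * m then wpow d ((a - b) * n) else 0 := by
  have h2 := two_mul_inv_two hd
  have hd0 : (d : ℂ) ≠ 0 := NeZero.ne _
  have hsum : ∀ k : ZMod d, ∑ j : ZMod d, wpow d (j * n - k * m) * Dop d k j a b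
      = wpow d ((a - b) * n) * wpow d (k * (a - 2⁻¹ * (a - b) - m)) := by
    intro k
    rw [Finset.sum_eq_single (a - b), Dop_apply, if_pos (by ring), ← wpow_add, ← wpow_add]
    · congr 1
      ring
    · intro j _ hj
      rw [Dop_apply, if_neg fun h => hj (by rw [h]; ring), mul_zero]
    · simp
  have hcond : a - 2⁻¹ * (a - b) - m = 0 ↔ a + b = 2 * m :=
    ⟨fun h => by linear_combination 2 * h + (a - b) * h2,
     fun h => by linear_combination 2⁻¹ * h + (m - a) * h2⟩
  simp only [phasePoint_eq_sum_Dop hd, Matrix.smul_apply, Matrix.sum_apply, smul_eq_mul, hsum,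
    ← Finset.mul_sum, sum_wpow_mul, hcond]
  split_ifs
  · field_simp
  · simp

lemma sum_wpow_mul_phasePoint_mul_conj_phasePoint (hd : Odd d) (m' n' m n j k i l : ZMod d) :
    ∑ mt : ZMod d, ∑ nt : ZMod d, wpow d (-(2 * (mt * (n' - n) - nt * (m' - m)))) *
        (phasePoint d (m + mt) (n + nt) k j * starRingEnd ℂ (phasePoint d (m' - mt) (n' - nt) l i))
      = d * (phasePoint d m' n' i j * phasePoint d m n k l) := by
  have h2 := two_mul_inv_two hd
  have hsummand : ∀ mt nt : ZMod d,
      wpow d (-(2 * (mt * (n' - n) - nt * (m' - m)))) *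
        (phasePoint d (m + mt) (n + nt) k j * starRingEnd ℂ (phasePoint d (m' - mt) (n' - nt) l i))
      = if k + j = 2 * (m + mt) ∧ l + i = 2 * (m' - mt) then
        wpow d (nt * (2 * (m' - m) + (k - j) + (l - i))) *
          wpow d (-(2 * mt * (n' - n)) + (k - j) * n - (l - i) * n')
        else 0 := by
    intro mt nt
    simp only [phasePoint_apply hd, apply_ite (starRingEnd ℂ), map_zero, conj_wpow, ite_and]
    split_ifs
    · simp only [← wpow_add]
      congr 1
      ring
    all_goals simp
  simp only [hsummand, Finset.sum_ite_irrel, Finset.sum_const_zero, ← Finset.sum_mul,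
    sum_wpow_mul, ite_mul, zero_mul, ← ite_and, midpoint_conditions_iff h2]
  simp only [ite_and, Finset.sum_ite_irrel, Finset.sum_ite_eq', Finset.mem_univ, if_true,
    Finset.sum_const_zero, phasePoint_apply hd]
  split_ifs with _ hkl
  · rw [← wpow_add]
    congr 2
    linear_combination (n - n') * hkl - (j + k) * (n' - n) * h2
  all_goals simp

end OddModulus

theorem propagator_trace_form_general
    (d : ℕ) [NeZero d] (hodd : Odd d)
    (U : Matrix (ZMod d) (ZMod d) ℂ)
    (m' n' m n : ZMod d) :
    propG d U (m', n') (m, n) =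
      (1 / (d : ℂ)) *
        Matrix.trace (phasePoint d m' n' * U * phasePoint d m n * Uᴴ) := by
  rw [propG, trace_mul_mul_mul_conjTranspose]
  simp only [psSymbol_eq_trace_mul_phasePoint hodd, mul_assoc (wpow d _),
    sum_mul_trace_mul_mul_conj_trace_mul, sum_wpow_mul_phasePoint_mul_conj_phasePoint hodd,
    Finset.mul_sum]
  congr! 4
  field_simp

theorem propagator_trace_form
    (d : ℕ) [NeZero d] (hd : Nat.Prime d) (hodd : Odd d)
    (U : Matrix (ZMod d) (ZMod d) ℂ) (hU : U ∈ Matrix.unitaryGroup (ZMod d) ℂ)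
    (m' n' m n : ZMod d) :
    propG d U (m', n') (m, n) =
      (1 / (d : ℂ)) *
        Matrix.trace (phasePoint d m' n' * U * phasePoint d m n * Uᴴ) :=
  propagator_trace_form_general d hodd U m' n' m n
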